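/- arXiv:1309.5613 — 3 statements merged into one kernel-verified Lean document; each statement's English description precedes it below -/
import Mathlib

section
/- For all k ∈ ℝ^d \ {0} and λ > 0, and for ψ : ℝ^d → ℝ bounded with compact support, ∫_{ℝ^d} ψ(ξ)² / (1 + (ξ·k)²/λ²) dξ ≤ ‖ψ‖_∞² C_ψ min(1, π λ/|k|), where C_ψ depends only on the support of ψ (one may take C_ψ to be the (d-1)-dimensional measure of the projection of supp ψ times its diameter). -/
/-!
Choose an orthonormal basis whose first vector is `k / ‖k‖`, so that `⟪ξ, k⟫ = ‖k‖ ξ₀`. Since `ψ`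
vanishes outside a ball of radius `R`, the integrand is at most `‖ψ‖∞²` times the product of
`(1 + (a ξ₀)²)⁻¹`, `a = ‖k‖ / λ`, with the indicators of `[-R, R]` in all coordinates. By Fubini the
integral is then bounded by `‖ψ‖∞² (2R)^(d-1)` times a one-dimensional integral over `[-R, R]`,
which is at most `2R` (the integrand is at most `1`) and at most `∫_ℝ (1 + (a t)²)⁻¹ = π / a`.
-/

open MeasureTheory Real Set Module

lemma integral_inv_one_add_mul_sq {a : ℝ} (ha : 0 < a) :
    ∫ t : ℝ, (1 + (a * t) ^ 2)⁻¹ = π / a := by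
  rw [Measure.integral_comp_mul_left (fun t => (1 + t ^ 2)⁻¹), integral_univ_inv_one_add_sq,
    abs_of_pos (inv_pos.2 ha), smul_eq_mul, inv_mul_eq_div]

lemma setIntegral_Icc_inv_one_add_mul_sq_le {a R : ℝ} (ha : 0 < a) (hR : 0 ≤ R) :
    ∫ t in Icc (-R) R, (1 + (a * t) ^ 2)⁻¹ ≤ min (2 * R) (π / a) := by
  have hint : Integrable fun t : ℝ => (1 + (a * t) ^ 2)⁻¹ :=
    integrable_inv_one_add_sq.comp_mul_left' ha.ne'
  refine le_min ?_ ?_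
  · calc ∫ t in Icc (-R) R, (1 + (a * t) ^ 2)⁻¹ ≤ ∫ _ in Icc (-R) R, (1 : ℝ) :=
          setIntegral_mono hint.integrableOn (integrableOn_const measure_Icc_lt_top.ne)
            fun t => inv_le_one_of_one_le₀ (by nlinarith [sq_nonneg (a * t)])
      _ = 2 * R := by
          rw [setIntegral_const, smul_eq_mul, mul_one, Real.volume_real_Icc, max_eq_left] <;>
            linarith
  · rw [← integral_inv_one_add_mul_sq ha]
    exact setIntegral_le_integral hint (.of_forall fun t => by positivity)

lemma exists_orthonormalBasis_apply_zero {𝕜 E : Type*} [RCLike 𝕜] [NormedAddCommGroup E]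
    [InnerProductSpace 𝕜 E] {n : ℕ} (hn : finrank 𝕜 E = n + 1) {e : E} (he : ‖e‖ = 1) :
    ∃ b : OrthonormalBasis (Fin (n + 1)) 𝕜 E, b 0 = e := by
  have : FiniteDimensional 𝕜 E := Module.finite_of_finrank_eq_succ hn
  have he' : Orthonormal 𝕜 (({0} : Set (Fin (n + 1))).domRestrict fun _ => e) :=
    orthonormal_subsingleton_iff.2 fun _ => he
  obtain ⟨b, hb⟩ := he'.exists_orthonormalBasis_extension_of_card_eq (by simpa using hn)
  exact ⟨b, hb 0 rfl⟩

section InnerProductSpace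

variable {ι E : Type*} [Fintype ι] [NormedAddCommGroup E] [InnerProductSpace ℝ E]
  [FiniteDimensional ℝ E] [MeasurableSpace E] [BorelSpace E]

lemma OrthonormalBasis.measurePreserving_measurableEquiv_ofLp (b : OrthonormalBasis ι ℝ E) :
    MeasurePreserving (b.measurableEquiv.trans (MeasurableEquiv.toLp 2 (ι → ℝ)).symm) :=
  (EuclideanSpace.volume_preserving_symm_measurableEquiv_toLp ι).comp
    b.measurePreserving_measurableEquiv

lemma OrthonormalBasis.integrable_prod_repr (b : OrthonormalBasis ι ℝ E) {g : ι → ℝ → ℝ}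
    (hg : ∀ i, Integrable (g i)) : Integrable fun ξ => ∏ i, g i (b.repr ξ i) :=
  (b.measurePreserving_measurableEquiv_ofLp.integrable_comp_emb
    (MeasurableEquiv.measurableEmbedding _)).2 (Integrable.fintype_prod hg)

lemma OrthonormalBasis.integral_prod_repr (b : OrthonormalBasis ι ℝ E) (g : ι → ℝ → ℝ) :
    ∫ ξ, ∏ i, g i (b.repr ξ i) = ∏ i, ∫ t, g i t :=
  (b.measurePreserving_measurableEquiv_ofLp.integral_comp' fun x => ∏ i, g i (x i)).trans
    (integral_fintype_prod_volume_eq_prod g)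

lemma integral_mul_comp_inner_le {n : ℕ} (hn : finrank ℝ E = n + 1) {e : E} (he : ‖e‖ = 1)
    {φ : E → ℝ} {M R : ℝ} (hφ0 : 0 ≤ φ) (hφM : ∀ ξ, φ ξ ≤ M)
    (hφR : Function.support φ ⊆ Metric.closedBall 0 R) (hR : 0 ≤ R)
    {f : ℝ → ℝ} (hf0 : 0 ≤ f) (hf : IntegrableOn f (Icc (-R) R)) :
    ∫ ξ, φ ξ * f (inner ℝ ξ e) ≤ M * (2 * R) ^ n * ∫ t in Icc (-R) R, f t := by
  obtain ⟨b, hb⟩ := exists_orthonormalBasis_apply_zero hn he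
  set g : Fin (n + 1) → ℝ → ℝ := fun i =>
    (Icc (-R) R).indicator (Fin.cons (α := fun _ => ℝ → ℝ) f 1 i)
  have hM : 0 ≤ M := (hφ0 0).trans (hφM 0)
  have hg_int : ∀ i, Integrable (g i) := Fin.cases (hf.integrable_indicator measurableSet_Icc)
    fun _ => (integrableOn_const measure_Icc_lt_top.ne).integrable_indicator measurableSet_Icc
  have hg_nonneg : ∀ i t, 0 ≤ g i t := Fin.cases (fun t => indicator_nonneg (fun s _ => hf0 s) t)
    fun _ t => indicator_nonneg (fun _ _ => zero_le_one) t
  have hbound : ∀ ξ, φ ξ * f (inner ℝ ξ e) ≤ M * ∏ i, g i (b.repr ξ i) := by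
    intro ξ
    by_cases hξ : ξ ∈ Metric.closedBall 0 R
    · have hmem : ∀ i, b.repr ξ i ∈ Icc (-R) R := fun i =>
        abs_le.1 ((PiLp.norm_apply_le (b.repr ξ) i).trans (by simpa using hξ))
      have hprod : ∏ i, g i (b.repr ξ i) = f (inner ℝ ξ e) := by
        have hind (i) (h : ℝ → ℝ) : (Icc (-R) R).indicator h (b.repr ξ i) = h (b.repr ξ i) :=
          indicator_of_mem (hmem i) h
        simp only [g, hind, Fin.prod_univ_succ, Fin.cons_zero, Fin.cons_succ, Pi.one_apply,
          Finset.prod_const_one, mul_one]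
        rw [b.repr_apply_apply, hb, real_inner_comm]
      rw [hprod]
      exact mul_le_mul_of_nonneg_right (hφM ξ) (hf0 _)
    · rw [Function.notMem_support.1 (mt (@hφR ξ) hξ), zero_mul]
      exact mul_nonneg hM (Finset.prod_nonneg fun i _ => hg_nonneg i _)
  calc ∫ ξ, φ ξ * f (inner ℝ ξ e) ≤ ∫ ξ, M * ∏ i, g i (b.repr ξ i) :=
        integral_mono_of_nonneg (.of_forall fun ξ => mul_nonneg (hφ0 ξ) (hf0 _))
          ((b.integrable_prod_repr hg_int).const_mul M) (.of_forall hbound)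
    _ = M * (2 * R) ^ n * ∫ t in Icc (-R) R, f t := by
        rw [integral_const_mul, b.integral_prod_repr, Fin.prod_univ_succ]
        simp only [g, Fin.cons_zero, Fin.cons_succ, integral_indicator measurableSet_Icc,
          Pi.one_apply, setIntegral_const, smul_eq_mul, mul_one, Real.volume_real_Icc,
          Finset.prod_const, Finset.card_univ, Fintype.card_fin,
          max_eq_left (by linarith : 0 ≤ R - -R)]
        ring

end InnerProductSpace

theorem stmt_7_general (d : ℕ) (ψ : EuclideanSpace ℝ (Fin d) → ℝ)
    (hψc : HasCompactSupport ψ)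
    (hψb : ∃ Bd, ∀ ξ, |ψ ξ| ≤ Bd) :
    ∃ C : ℝ, 0 ≤ C ∧ ∀ (k : EuclideanSpace ℝ (Fin d)), k ≠ 0 → ∀ l : ℝ, 0 < l →
      (∫ ξ : EuclideanSpace ℝ (Fin d), ψ ξ ^ 2 / (1 + (inner ℝ ξ k : ℝ) ^ 2 / l ^ 2)) ≤
        (⨆ ξ, |ψ ξ|) ^ 2 * C * min 1 (Real.pi * l / ‖k‖) := by
  obtain ⟨B, hB⟩ := hψb
  set M := ⨆ ξ, |ψ ξ|
  have hψM (ξ) : ψ ξ ^ 2 ≤ M ^ 2 := by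
    rw [← sq_abs]
    exact pow_le_pow_left₀ (abs_nonneg _) (le_ciSup ⟨B, forall_mem_range.2 hB⟩ ξ) 2
  obtain ⟨R, hR, hψR⟩ := hψc.isBounded.subset_closedBall_lt 1 0
  have hsupp : Function.support (fun ξ => ψ ξ ^ 2) ⊆ Metric.closedBall 0 R := fun ξ hξ =>
    hψR (subset_tsupport ψ (by simpa using hξ))
  refine ⟨(2 * R) ^ d, by positivity, fun k hk l hl => ?_⟩
  obtain ⟨n, rfl⟩ : ∃ n, d = n + 1 :=
    Nat.exists_eq_succ_of_ne_zero (by rintro rfl; exact hk (Subsingleton.elim _ _))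
  have hk' : 0 < ‖k‖ := norm_pos_iff.2 hk
  set a := ‖k‖ / l with ha_def
  have ha : 0 < a := div_pos hk' hl
  have he : ‖‖k‖⁻¹ • k‖ = 1 := by rw [norm_smul, norm_inv, norm_norm, inv_mul_cancel₀ hk'.ne']
  have hintegrand (ξ) : ψ ξ ^ 2 / (1 + inner ℝ ξ k ^ 2 / l ^ 2)
      = ψ ξ ^ 2 * (1 + (a * inner ℝ ξ (‖k‖⁻¹ • k)) ^ 2)⁻¹ := by
    rw [real_inner_smul_right, ha_def]
    field_simp
  calc ∫ ξ, ψ ξ ^ 2 / (1 + inner ℝ ξ k ^ 2 / l ^ 2)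
      = ∫ ξ, ψ ξ ^ 2 * (1 + (a * inner ℝ ξ (‖k‖⁻¹ • k)) ^ 2)⁻¹ := by simp_rw [hintegrand]
    _ ≤ M ^ 2 * (2 * R) ^ n * ∫ t in Icc (-R) R, (1 + (a * t) ^ 2)⁻¹ :=
        integral_mul_comp_inner_le finrank_euclideanSpace_fin he (fun ξ => sq_nonneg _) hψM
          hsupp (by linarith) (fun t => by positivity)
          (integrable_inv_one_add_sq.comp_mul_left' ha.ne').integrableOn
    _ ≤ M ^ 2 * (2 * R) ^ n * min (2 * R) (π / a) := by
        gcongr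
        exact setIntegral_Icc_inv_one_add_mul_sq_le ha (by linarith)
    _ ≤ M ^ 2 * (2 * R) ^ (n + 1) * min 1 (π * l / ‖k‖) := by
        have hmin : min (2 * R) (π / a) ≤ 2 * R * min 1 (π * l / ‖k‖) := by
          rw [mul_min_of_nonneg _ _ (by linarith), mul_one, ha_def, div_div_eq_mul_div]
          exact min_le_min_left _ (le_mul_of_one_le_left (by positivity) (by linarith))
        calc _ ≤ M ^ 2 * (2 * R) ^ n * (2 * R * min 1 (π * l / ‖k‖)) := by gcongr
          _ = _ := by ring

theorem stmt_7 (d : ℕ) (ψ : EuclideanSpace ℝ (Fin d) → ℝ)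
    (hψm : Measurable ψ) (hψc : HasCompactSupport ψ)
    (hψb : ∃ Bd, ∀ ξ, |ψ ξ| ≤ Bd) :
    ∃ C : ℝ, 0 ≤ C ∧ ∀ (k : EuclideanSpace ℝ (Fin d)), k ≠ 0 → ∀ l : ℝ, 0 < l →
      (∫ ξ : EuclideanSpace ℝ (Fin d), ψ ξ ^ 2 / (1 + (inner ℝ ξ k : ℝ) ^ 2 / l ^ 2)) ≤
        (⨆ ξ, |ψ ξ|) ^ 2 * C * min 1 (Real.pi * l / ‖k‖) :=
  stmt_7_general d ψ hψc hψb
end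

section
/- Consider the periodic transport x ↦ x + cs (mod 1) on [0,1] with speed c ≠ 0, an observation window [a,b] ⊂ (0,1), and define X_t(x) = ∫₀^t 1_{[a,b]}(x + cs mod 1) ds. Then inf_x X_t(x) > 0 if and only if t > (1 - (b - a))/|c|. -/
/-!
Substituting `u = x + c s` turns the observation time `X_t(x)` into `|c|⁻¹` times the integral of
`w = periodicWindow a b` over an interval of length `L = |c| t`, and every such interval
occurs as `x` varies. Over a full period `w` has integral `b - a`, so an interval of length
`L ≤ 1` loses at most `1 - L` of it: the integral is at least `L - (1 - (b - a))`, which is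
positive once `L > 1 - (b - a)`. Conversely `w` vanishes on the gap `(b, 1 + a)` of length
`1 - (b - a)`, so for `0 ≤ L ≤ 1 - (b - a)` the interval `[b, b + L]` is never observed.
-/

open MeasureTheory Real

noncomputable def periodicWindow (a b y : ℝ) : ℝ :=
  Set.indicator (Set.Icc a b) (fun _ => (1:ℝ)) (Int.fract y)

section periodicWindow

variable {a b : ℝ}

lemma periodicWindow_nonneg (y : ℝ) : 0 ≤ periodicWindow a b y :=
  Set.indicator_nonneg (fun _ _ => zero_le_one) _

lemma periodicWindow_le_one (y : ℝ) : periodicWindow a b y ≤ 1 :=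
  Set.indicator_le_self' (fun _ _ => zero_le_one) _

lemma periodicWindow_periodic : Function.Periodic (periodicWindow a b) 1 := by
  intro y
  simp only [periodicWindow, Int.fract_add_one]

lemma intervalIntegrable_periodicWindow (u v : ℝ) :
    IntervalIntegrable (periodicWindow a b) volume u v := by
  refine intervalIntegrable_const (c := (1:ℝ)).mono_fun ?_ (Filter.Eventually.of_forall fun y => ?_)
  · exact ((measurable_const.indicator measurableSet_Icc).comp measurable_fract).aestronglyMeasurable
  · simp only [norm_one, Real.norm_of_nonneg (periodicWindow_nonneg y)]
    exact periodicWindow_le_one y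

lemma integral_periodicWindow_period (ha : 0 < a) (hab : a ≤ b) (hb : b < 1) (x : ℝ) :
    ∫ y in x..x + 1, periodicWindow a b y = b - a := by
  rw [periodicWindow_periodic.intervalIntegral_add_eq x 0, zero_add,
    intervalIntegral.integral_of_le zero_le_one, integral_Ioc_eq_integral_Ioo]
  have hfract : Set.EqOn (periodicWindow a b) ((Set.Icc a b).indicator fun _ => 1) (Set.Ioo 0 1) :=
    fun y hy => by rw [periodicWindow, Int.fract_eq_self.2 ⟨hy.1.le, hy.2⟩]
  rw [setIntegral_congr_fun measurableSet_Ioo hfract, setIntegral_indicator measurableSet_Icc,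
    Set.inter_eq_right.2 (Set.Icc_subset_Ioo ha hb), setIntegral_const,
    Real.volume_real_Icc_of_le hab, smul_eq_mul, mul_one]

lemma periodicWindow_eq_zero_of_mem_Ioo (ha : 0 ≤ a) (hab : a ≤ b) (hb : b < 1) {y : ℝ}
    (hy : y ∈ Set.Ioo b (1 + a)) : periodicWindow a b y = 0 := by
  refine Set.indicator_of_notMem (fun hmem => ?_) _
  rcases lt_or_ge y 1 with hy1 | hy1
  · rw [Int.fract_eq_self.2 ⟨by linarith [hy.1], hy1⟩] at hmem
    linarith [hy.1, hmem.2]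
  · have hfract : Int.fract y = y - 1 :=
      Int.fract_eq_iff.2 ⟨by linarith, by linarith [hy.2], 1, by push_cast; ring⟩
    rw [hfract] at hmem
    linarith [hy.2, hmem.1]

lemma integral_periodicWindow_gap (ha : 0 ≤ a) (hab : a ≤ b) (hb : b < 1) {L : ℝ}
    (hL0 : 0 ≤ L) (hL : L ≤ 1 - (b - a)) :
    ∫ y in b..b + L, periodicWindow a b y = 0 := by
  rw [intervalIntegral.integral_of_le (le_add_of_nonneg_right hL0), integral_Ioc_eq_integral_Ioo]
  exact setIntegral_eq_zero_of_forall_eq_zero fun y hy =>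
    periodicWindow_eq_zero_of_mem_Ioo ha hab hb ⟨hy.1, by linarith [hy.2]⟩

lemma sub_le_integral_periodicWindow (ha : 0 < a) (hab : a ≤ b) (hb : b < 1) (x : ℝ) {L : ℝ}
    (hL1 : L ≤ 1) :
    (b - a) - (1 - L) ≤ ∫ y in x..x + L, periodicWindow a b y := by
  have hsplit := intervalIntegral.integral_add_adjacent_intervals
    (intervalIntegrable_periodicWindow (a := a) (b := b) x (x + L))
    (intervalIntegrable_periodicWindow (x + L) (x + 1))
  have hrest : ∫ y in x + L..x + 1, periodicWindow a b y ≤ 1 - L := by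
    calc ∫ y in x + L..x + 1, periodicWindow a b y ≤ ∫ _ in x + L..x + 1, (1:ℝ) :=
          intervalIntegral.integral_mono_on (by linarith) (intervalIntegrable_periodicWindow _ _)
            intervalIntegrable_const fun y _ => periodicWindow_le_one y
      _ = 1 - L := by simp only [intervalIntegral.integral_const, smul_eq_mul, mul_one]; ring
  linarith [integral_periodicWindow_period ha hab hb x]

lemma abs_integral_periodicWindow_le (y L : ℝ) :
    |∫ u in y..y + L, periodicWindow a b u| ≤ |L| := by
  have hbound := intervalIntegral.norm_integral_le_of_norm_le_const (a := y) (b := y + L)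
    (C := 1) fun u _ => (Real.norm_of_nonneg (periodicWindow_nonneg (a := a) (b := b) u)).trans_le
      (periodicWindow_le_one u)
  rwa [Real.norm_eq_abs, one_mul, add_sub_cancel_left] at hbound

lemma integral_periodicWindow_mono (y : ℝ) {L₁ L : ℝ} (hL : L₁ ≤ L) :
    ∫ u in y..y + L₁, periodicWindow a b u ≤ ∫ u in y..y + L, periodicWindow a b u := by
  have hsplit := intervalIntegral.integral_add_adjacent_intervals
    (intervalIntegrable_periodicWindow (a := a) (b := b) y (y + L₁))
    (intervalIntegrable_periodicWindow (y + L₁) (y + L))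
  have htail : 0 ≤ ∫ u in y + L₁..y + L, periodicWindow a b u :=
    intervalIntegral.integral_nonneg (by linarith) fun u _ => periodicWindow_nonneg u
  linarith

theorem iInf_integral_periodicWindow_pos_iff (ha : 0 < a) (hab : a < b) (hb : b < 1) (L : ℝ) :
    (0 < ⨅ y : ℝ, ∫ u in y..y + L, periodicWindow a b u) ↔ 1 - (b - a) < L := by
  constructor
  · intro hpos
    by_contra! hL
    have hbdd : BddBelow (Set.range fun y : ℝ => ∫ u in y..y + L, periodicWindow a b u) :=
      ⟨-|L|, Set.forall_mem_range.2 fun y => neg_le_of_abs_le (abs_integral_periodicWindow_le y L)⟩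
    have hunobserved : ∃ y : ℝ, ∫ u in y..y + L, periodicWindow a b u ≤ 0 := by
      rcases le_or_gt L 0 with hL0 | hL0
      · refine ⟨0, ?_⟩
        simpa using integral_periodicWindow_mono (a := a) (b := b) 0 hL0
      · exact ⟨b, (integral_periodicWindow_gap ha.le hab.le hb hL0.le hL).le⟩
    obtain ⟨y, hy⟩ := hunobserved
    exact absurd (hpos.trans_le (ciInf_le hbdd y)) hy.not_gt
  · intro hL
    have hL₁ : 1 - (b - a) < min L 1 := lt_min hL (by linarith)
    refine lt_of_lt_of_le (by linarith : 0 < (b - a) - (1 - min L 1)) (le_ciInf fun y => ?_)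
    exact (sub_le_integral_periodicWindow ha hab.le hb y (min_le_right _ _)).trans
      (integral_periodicWindow_mono y (min_le_left _ _))

end periodicWindow

lemma range_integral_comp_add_mul {E : Type*} [NormedAddCommGroup E] [NormedSpace ℝ E]
    (f : ℝ → E) {c : ℝ} (hc : c ≠ 0) (t : ℝ) :
    Set.range (fun x : ℝ => ∫ s in (0:ℝ)..t, f (x + c * s)) =
      Set.range (fun y : ℝ => |c|⁻¹ • ∫ u in y..y + |c| * t, f u) := by
  simp only [intervalIntegral.integral_comp_add_mul f hc, mul_zero, add_zero]
  rcases hc.lt_or_gt with hneg | hpos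
  · -- for `c < 0` the interval `[x + c t, x]` is traversed backwards; reindex by its left end
    rw [← (Equiv.addRight (c * t)).surjective.range_comp
      (fun y => |c|⁻¹ • ∫ u in y..y + |c| * t, f u)]
    congr 1
    ext x
    simp only [Function.comp, Equiv.coe_addRight, abs_of_neg hneg, inv_neg, neg_mul,
      add_neg_cancel_right, neg_smul, intervalIntegral.integral_symm x, smul_neg, neg_neg]
  · simp only [abs_of_pos hpos]

theorem stmt_11 (a b c t : ℝ) (ha : 0 < a) (hab : a < b) (hb : b < 1) (hc : c ≠ 0) :
    (0 < ⨅ x : ℝ, ∫ s in (0:ℝ)..t,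
        Set.indicator (Set.Icc a b) (fun _ => (1:ℝ)) (Int.fract (x + c * s))) ↔
      (1 - (b - a)) / |c| < t := by
  have hc' : 0 < |c| := abs_pos.2 hc
  have hreparam : (⨅ x : ℝ, ∫ s in (0:ℝ)..t, periodicWindow a b (x + c * s)) =
      ⨅ y : ℝ, |c|⁻¹ * ∫ u in y..y + |c| * t, periodicWindow a b u :=
    congrArg sInf (range_integral_comp_add_mul (periodicWindow a b) hc t)
  change (0 < ⨅ x : ℝ, ∫ s in (0:ℝ)..t, periodicWindow a b (x + c * s)) ↔ _
  rw [hreparam, ← Real.mul_iInf_of_nonneg (inv_nonneg.2 hc'.le),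
    mul_pos_iff_of_pos_left (inv_pos.2 hc'), iInf_integral_periodicWindow_pos_iff ha hab hb,
    div_lt_iff₀ hc', mul_comm]
end

section
/- Let λ > 0, Δt > 0, Δx > 0, σ = Δt/Δx, and ξ ∈ ℝ satisfy Δt ≤ Δx/(λΔx + |ξ|). Then the update fᵢ^{new} = fᵢ(1 - σξ⁺ + σξ⁻ - λΔt) + σξ⁺ f_{i-1} - σξ⁻ f_{i+1} + λΔt M̃ᵢ is a convex combination of fᵢ, f_{i-1}, f_{i+1}, M̃ᵢ; in particular, if fᵢ, f_{i-1}, f_{i+1}, M̃ᵢ ≥ 0 then fᵢ^{new} ≥ 0. -/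
theorem stmt_16 (l Δt Δx ξ : ℝ) (hl : 0 < l) (hΔt : 0 < Δt) (hΔx : 0 < Δx)
    (hCFL : Δt ≤ Δx / (l * Δx + |ξ|))
    (fi fim fip Mi : ℝ) :
    (0 ≤ 1 - (Δt / Δx) * max ξ 0 + (Δt / Δx) * min ξ 0 - l * Δt ∧
      0 ≤ (Δt / Δx) * max ξ 0 ∧
      0 ≤ -((Δt / Δx) * min ξ 0) ∧
      0 ≤ l * Δt ∧
      (1 - (Δt / Δx) * max ξ 0 + (Δt / Δx) * min ξ 0 - l * Δt) +
        (Δt / Δx) * max ξ 0 + (-((Δt / Δx) * min ξ 0)) + l * Δt = 1) ∧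
    (0 ≤ fi → 0 ≤ fim → 0 ≤ fip → 0 ≤ Mi →
      0 ≤ fi * (1 - (Δt / Δx) * max ξ 0 + (Δt / Δx) * min ξ 0 - l * Δt) +
        (Δt / Δx) * max ξ 0 * fim - (Δt / Δx) * min ξ 0 * fip + l * Δt * Mi) := by
  have hσ : 0 < Δt / Δx := div_pos hΔt hΔx
  have hden : 0 < l * Δx + |ξ| := by positivity
  have hCFL' : Δt * (l * Δx + |ξ|) ≤ Δx := by
    rw [le_div_iff₀ hden] at hCFL; linarith
  have habs : max ξ 0 - min ξ 0 = |ξ| := by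
    rcases le_total ξ 0 with h | h <;>
      simp [max_eq_right h, min_eq_left h, max_eq_left h, min_eq_right h,
        abs_of_nonpos, abs_of_nonneg, h]
  have h1 : 0 ≤ 1 - (Δt / Δx) * max ξ 0 + (Δt / Δx) * min ξ 0 - l * Δt := by
    have : (Δt / Δx) * (max ξ 0 - min ξ 0) = Δt * |ξ| / Δx := by
      rw [habs]; ring
    have h2 : Δt * |ξ| / Δx ≤ 1 - l * Δt := by
      rw [div_le_iff₀ hΔx]; nlinarith
    nlinarith [this]
  have h2 : 0 ≤ (Δt / Δx) * max ξ 0 := by positivity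
  have h3 : 0 ≤ -((Δt / Δx) * min ξ 0) := by
    have : min ξ 0 ≤ 0 := min_le_right _ _
    nlinarith
  have h4 : 0 ≤ l * Δt := by positivity
  refine ⟨⟨h1, h2, h3, h4, by ring⟩, fun hfi hfim hfip hMi => ?_⟩
  have := mul_nonneg hfi h1
  have := mul_nonneg h2 hfim
  have := mul_nonneg h3 hfip
  have := mul_nonneg h4 hMi
  nlinarith
end
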